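/- Consider N UAVs with computation times T_n^{comp} ≥ 0, payload sizes d_n > 0, bandwidth B > 0 and SNR constants c_n > 0. Let T_min = max_n (T_n^{comp} + d_n·ln 2/(B·c_n)), and for T > T_min let γ_n(T) > 0 denote the unique solution of f_{c_n}(γ) = d_n·ln 2/(B(T − T_n^{comp})). Then the total demanded bandwidth S(T) = Σ_{n=1}^N γ_n(T) is continuous and strictly decreasing on (T_min, ∞), S(T) → ∞ as T → T_min⁺, and S(T) → 0 as T → ∞; hence there is a unique T* ∈ (T_min, ∞) with S(T*) = 1. -/

import Mathlib

/-!
Each `γ_n(T)` solves `f_{c_n}(γ) = v_n(T)` with `f_c` strictly increasing on `(0, ∞)` (its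
derivative is `ln(1 + x) - x/(1 + x) > 0` at `x = c/γ`) and `v_n(T) = d_n ln 2 / (B(T - T_n^comp))`
continuous and strictly decreasing, so monotonicity, continuity and both limits pass from `v_n`
to `γ_n` by order arguments alone, without constructing the inverse of `f_c`. For the UAV `m`
attaining the maximum in `T_min`, `v_m(T) → c_m` as `T → T_min⁺` while `f_{c_m} < c_m`, which
forces `γ_m(T) → ∞`. The intermediate value theorem and strict monotonicity then give `T*`.
-/

open Real Set Filter Topology

section InverseOfStrictMono

variable {ι α β : Type*} [LinearOrder α] [LinearOrder β] {f : α → β} {s : Set α}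

theorem StrictMonoOn.strictAntiOn_of_comp [Preorder ι] {g : ι → α} {t : Set ι}
    (hf : StrictMonoOn f s) (hg : MapsTo g t s) (hfg : StrictAntiOn (f ∘ g) t) :
    StrictAntiOn g t :=
  fun _ hx _ hy hxy => (hf.lt_iff_lt (hg hy) (hg hx)).1 (hfg hx hy hxy)

variable [TopologicalSpace β] [OrderTopology β] {l : Filter ι} {g : ι → α}

theorem StrictMonoOn.tendsto_atTop_of_tendsto_comp {b : β} (hf : StrictMonoOn f s)
    (hs : ¬BddAbove s) (hfb : ∀ x ∈ s, f x < b) (hg : ∀ᶠ i in l, g i ∈ s)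
    (hfg : Tendsto (f ∘ g) l (𝓝 b)) : Tendsto g l atTop := by
  refine tendsto_atTop.2 fun M => ?_
  obtain ⟨x, hxs, hMx⟩ := not_bddAbove_iff.1 hs M
  filter_upwards [hg, (tendsto_order.1 hfg).1 _ (hfb x hxs)] with i hgi hfgi
  exact hMx.le.trans ((hf.lt_iff_lt hxs hgi).1 hfgi).le

variable [TopologicalSpace α] [OrderTopology α]

theorem StrictMonoOn.tendsto_of_tendsto_comp [DenselyOrdered α] {y : α}
    (hf : StrictMonoOn f s) (hs : s ∈ 𝓝 y) (hg : ∀ᶠ i in l, g i ∈ s)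
    (hfg : Tendsto (f ∘ g) l (𝓝 (f y))) : Tendsto g l (𝓝 y) := by
  have hys : y ∈ s := mem_of_mem_nhds hs
  refine tendsto_order.2 ⟨fun a hay => ?_, fun a hya => ?_⟩
  · obtain ⟨a', ⟨haa', ha'y⟩, hsub⟩ := exists_Ioc_subset_of_mem_nhds' hs hay
    obtain ⟨x, ha'x, hxy⟩ := exists_between ha'y
    have hxs : x ∈ s := hsub ⟨ha'x, hxy.le⟩
    filter_upwards [hg, (tendsto_order.1 hfg).1 _ (hf hxs hys hxy)] with i hgi hfgi
    exact haa'.trans_lt (ha'x.trans ((hf.lt_iff_lt hxs hgi).1 hfgi))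
  · obtain ⟨a', ⟨hya', ha'a⟩, hsub⟩ := exists_Ico_subset_of_mem_nhds' hs hya
    obtain ⟨x, hyx, hxa'⟩ := exists_between hya'
    have hxs : x ∈ s := hsub ⟨hyx.le, hxa'⟩
    filter_upwards [hg, (tendsto_order.1 hfg).2 _ (hf hys hxs hyx)] with i hgi hfgi
    exact ((hf.lt_iff_lt hgi hxs).1 hfgi).trans (hxa'.trans_le ha'a)

theorem StrictMonoOn.tendsto_of_tendsto_comp_of_Ioi {a : α} {b : β}
    (hf : StrictMonoOn f (Ioi a)) (hfb : ∀ x ∈ Ioi a, b < f x)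
    (hg : ∀ᶠ i in l, g i ∈ Ioi a)
    (hfg : Tendsto (f ∘ g) l (𝓝 b)) : Tendsto g l (𝓝 a) := by
  refine tendsto_order.2 ⟨fun a' ha' => hg.mono fun i hi => ha'.trans hi, fun x hx => ?_⟩
  filter_upwards [hg, (tendsto_order.1 hfg).2 _ (hfb x hx)] with i hgi hfgi
  exact (hf.lt_iff_lt hgi hx).1 hfgi

end InverseOfStrictMono

theorem StrictAntiOn.existsUnique_eq_of_tendsto {S : ℝ → ℝ} {a b y : ℝ}
    (hcont : ContinuousOn S (Ioi a)) (hanti : StrictAntiOn S (Ioi a))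
    (hbot : Tendsto S (𝓝[>] a) atTop) (htop : Tendsto S atTop (𝓝 b)) (hby : b < y) :
    ∃! x, x ∈ Ioi a ∧ S x = y := by
  obtain ⟨x₁, hx₁y, hax₁⟩ := ((hbot.eventually_ge_atTop y).and self_mem_nhdsWithin).exists
  obtain ⟨x₂, hx₂y, hx₁x₂⟩ :=
    ((htop.eventually (gt_mem_nhds hby)).and (eventually_gt_atTop x₁)).exists
  have hsub : Icc x₁ x₂ ⊆ Ioi a := fun x hx => lt_of_lt_of_le hax₁ hx.1
  obtain ⟨x, hx, hSx⟩ :=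
    intermediate_value_Icc' hx₁x₂.le (hcont.mono hsub) ⟨hx₂y.le, hx₁y⟩
  exact ⟨x, ⟨hsub hx, hSx⟩, fun z hz => hanti.injOn hz.1 (hsub hx) (hz.2.trans hSx.symm)⟩

noncomputable def fdmaRate (c γ : ℝ) : ℝ := γ * log (1 + c / γ)

section FdmaRate

variable {c γ : ℝ}

theorem fdmaRate_pos (hc : 0 < c) (hγ : 0 < γ) : 0 < fdmaRate c γ :=
  mul_pos hγ (log_pos (lt_add_of_pos_right 1 (div_pos hc hγ)))

theorem fdmaRate_lt (hc : 0 < c) (hγ : 0 < γ) : fdmaRate c γ < c := by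
  have hlog : log (1 + c / γ) < c / γ := by
    have := log_lt_sub_one_of_pos (by positivity : 0 < 1 + c / γ)
      (lt_add_of_pos_right 1 (div_pos hc hγ)).ne'
    linarith
  calc fdmaRate c γ < γ * (c / γ) := mul_lt_mul_of_pos_left hlog hγ
    _ = c := mul_div_cancel₀ c hγ.ne'

theorem hasDerivAt_fdmaRate (hc : 0 < c) (hγ : 0 < γ) :
    HasDerivAt (fdmaRate c) (log (1 + c / γ) - c / (γ + c)) γ := by
  have hinner : HasDerivAt (fun x => 1 + c / x) (c * -(γ ^ 2)⁻¹) γ := by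
    simpa only [div_eq_mul_inv] using ((hasDerivAt_inv hγ.ne').const_mul c).const_add 1
  have hprod : HasDerivAt (fdmaRate c) _ γ :=
    (hasDerivAt_id γ).mul ((hasDerivAt_log (by positivity)).comp γ hinner)
  convert hprod using 1
  have : γ + c ≠ 0 := by positivity
  change _ = 1 * log (1 + c / γ) + γ * ((1 + c / γ)⁻¹ * (c * -(γ ^ 2)⁻¹))
  field_simp
  ring

theorem strictMonoOn_fdmaRate (hc : 0 < c) : StrictMonoOn (fdmaRate c) (Ioi 0) := by
  refine strictMonoOn_of_deriv_pos (convex_Ioi 0)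
    (fun x hx => (hasDerivAt_fdmaRate hc hx).continuousAt.continuousWithinAt) fun x hx => ?_
  rw [interior_Ioi, mem_Ioi] at hx
  rw [(hasDerivAt_fdmaRate hc hx).deriv, sub_pos]
  calc c / (x + c) ≤ 2 * (c / x) / (c / x + 2) := by
        rw [show 2 * (c / x) / (c / x + 2) = 2 * c / (c + 2 * x) by field_simp,
          div_le_div_iff₀ (by positivity) (by positivity)]
        nlinarith [mul_pos hc hx]
    _ < log (1 + c / x) := lt_log_one_add_of_pos (div_pos hc hx)

end FdmaRate

/-- `γ T` is the bandwidth fraction at which a UAV that finishes computing at time `t` delivers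
its payload exactly at time `T`; in the theorem `K = d_n ln 2`. -/
def IsBandwidthDemand (c K B t a : ℝ) (γ : ℝ → ℝ) : Prop :=
  ∀ T, a < T → 0 < γ T ∧ fdmaRate c (γ T) = K / (B * (T - t))

namespace IsBandwidthDemand

variable {c K B t a : ℝ} {γ : ℝ → ℝ}

theorem mapsTo (hγ : IsBandwidthDemand c K B t a γ) : MapsTo γ (Ioi a) (Ioi 0) :=
  fun T hT => (hγ T hT).1

theorem fdmaRate_comp_eventuallyEq (hγ : IsBandwidthDemand c K B t a γ) :
    fdmaRate c ∘ γ =ᶠ[𝓟 (Ioi a)] fun T => K / (B * (T - t)) :=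
  eventually_principal.2 fun T hT => (hγ T hT).2

theorem strictAntiOn (hγ : IsBandwidthDemand c K B t a γ) (hc : 0 < c) (hK : 0 < K)
    (hB : 0 < B) (hta : t ≤ a) : StrictAntiOn γ (Ioi a) := by
  refine (strictMonoOn_fdmaRate hc).strictAntiOn_of_comp hγ.mapsTo fun x hx y hy hxy => ?_
  have htx : 0 < x - t := sub_pos.2 (hta.trans_lt hx)
  simp only [Function.comp, (hγ x hx).2, (hγ y hy).2]
  gcongr

theorem continuousOn (hγ : IsBandwidthDemand c K B t a γ) (hc : 0 < c) (hB : B ≠ 0)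
    (hta : t ≤ a) : ContinuousOn γ (Ioi a) := by
  intro T hT
  have hnhds : Ioi a ∈ 𝓝 T := Ioi_mem_nhds hT
  refine ContinuousAt.continuousWithinAt <| (strictMonoOn_fdmaRate hc).tendsto_of_tendsto_comp
    (Ioi_mem_nhds (hγ T hT).1) (eventually_of_mem hnhds hγ.mapsTo) ?_
  rw [(hγ T hT).2]
  refine Tendsto.congr' (EventuallyEq.filter_mono hγ.fdmaRate_comp_eventuallyEq
    (le_principal_iff.2 hnhds)).symm ?_
  have : T - t ≠ 0 := sub_ne_zero.2 (hta.trans_lt hT).ne'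
  exact ContinuousAt.tendsto (by fun_prop (disch := positivity))

theorem tendsto_atTop (hγ : IsBandwidthDemand c K B t a γ) (hc : 0 < c) (hB : 0 < B) :
    Tendsto γ atTop (𝓝 0) := by
  refine (strictMonoOn_fdmaRate hc).tendsto_of_tendsto_comp_of_Ioi
    (fun x hx => fdmaRate_pos hc hx) ?_ ?_
  · filter_upwards [eventually_gt_atTop a] with T hT using (hγ T hT).1
  · refine Tendsto.congr' (EventuallyEq.filter_mono hγ.fdmaRate_comp_eventuallyEq
      (le_principal_iff.2 (Ioi_mem_atTop a))).symm ?_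
    exact tendsto_const_nhds.div_atTop
      ((tendsto_atTop_add_const_right _ (-t) tendsto_id).const_mul_atTop hB)

theorem tendsto_nhdsGT (hγ : IsBandwidthDemand c K B t a γ) (hc : 0 < c) (hK : 0 < K)
    (hB : 0 < B) (ha : a = t + K / (B * c)) : Tendsto γ (𝓝[>] a) atTop := by
  refine (strictMonoOn_fdmaRate hc).tendsto_atTop_of_tendsto_comp (not_bddAbove_Ioi 0)
    (fun x hx => fdmaRate_lt hc hx) (eventually_nhdsWithin_of_forall hγ.mapsTo) ?_
  refine Tendsto.congr' (EventuallyEq.filter_mono hγ.fdmaRate_comp_eventuallyEq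
    (le_principal_iff.2 self_mem_nhdsWithin)).symm ?_
  have hat : a - t = K / (B * c) := by rw [ha]; ring
  have hrate : K / (B * (a - t)) = c := by
    rw [hat]
    field_simp
  rw [← hrate]
  refine tendsto_nhdsWithin_of_tendsto_nhds (ContinuousAt.tendsto ?_)
  have : a - t ≠ 0 := by rw [hat]; positivity
  fun_prop (disch := positivity)

end IsBandwidthDemand

theorem total_bandwidth_demand_general (N : ℕ) (hN : 0 < N)
    (Tcomp d c : Fin N → ℝ) (B : ℝ)
    (hd : ∀ n, 0 < d n) (hc : ∀ n, 0 < c n) (hB : 0 < B)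
    (Tmin : ℝ) (hTmin : Tmin = ⨆ n, (Tcomp n + d n * Real.log 2 / (B * c n)))
    (γfun : Fin N → ℝ → ℝ)
    (hγfun : ∀ n, ∀ T : ℝ, Tmin < T →
      0 < γfun n T ∧
        γfun n T * Real.log (1 + c n / γfun n T) =
          d n * Real.log 2 / (B * (T - Tcomp n))) :
    ContinuousOn (fun T => ∑ n, γfun n T) (Set.Ioi Tmin) ∧
    StrictAntiOn (fun T => ∑ n, γfun n T) (Set.Ioi Tmin) ∧
    Filter.Tendsto (fun T => ∑ n, γfun n T)
      (nhdsWithin Tmin (Set.Ioi Tmin)) Filter.atTop ∧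
    Filter.Tendsto (fun T => ∑ n, γfun n T) Filter.atTop (nhds 0) ∧
    (∃! Tstar : ℝ, Tstar ∈ Set.Ioi Tmin ∧ ∑ n, γfun n Tstar = 1) := by
  have : Nonempty (Fin N) := Fin.pos_iff_nonempty.1 hN
  have hdem : ∀ n, IsBandwidthDemand (c n) (d n * log 2) B (Tcomp n) Tmin (γfun n) := hγfun
  have hK : ∀ n, 0 < d n * log 2 := fun n => mul_pos (hd n) (log_pos one_lt_two)
  have hTcomp_le : ∀ n, Tcomp n ≤ Tmin := fun n => by
    have hle := hTmin ▸ le_ciSup (Set.finite_range _).bddAbove n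
    linarith [div_pos (hK n) (mul_pos hB (hc n))]
  obtain ⟨m, hm⟩ := exists_eq_ciSup_of_finite (f := fun n => Tcomp n + d n * log 2 / (B * c n))
  have hcont : ContinuousOn (fun T => ∑ n, γfun n T) (Ioi Tmin) :=
    continuousOn_finsetSum _ fun n _ => (hdem n).continuousOn (hc n) hB.ne' (hTcomp_le n)
  have hanti : StrictAntiOn (fun T => ∑ n, γfun n T) (Ioi Tmin) := fun _ hx _ hy hxy =>
    Finset.sum_lt_sum_of_nonempty Finset.univ_nonempty fun n _ =>
      (hdem n).strictAntiOn (hc n) (hK n) hB (hTcomp_le n) hx hy hxy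
  have hbot : Tendsto (fun T => ∑ n, γfun n T) (𝓝[>] Tmin) atTop := by
    refine tendsto_atTop_mono' _ ?_
      ((hdem m).tendsto_nhdsGT (hc m) (hK m) hB (hm.trans hTmin.symm).symm)
    filter_upwards [self_mem_nhdsWithin] with T hT
    exact Finset.single_le_sum (fun n _ => (hγfun n T hT).1.le) (Finset.mem_univ m)
  have htop : Tendsto (fun T => ∑ n, γfun n T) atTop (𝓝 0) := by
    simpa using tendsto_finsetSum Finset.univ fun n _ => (hdem n).tendsto_atTop (hc n) hB
  exact ⟨hcont, hanti, hbot, htop, hanti.existsUnique_eq_of_tendsto hcont hbot htop one_pos⟩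

/-- For `N` UAVs with computation times `T_n^comp ≥ 0`, payloads `d_n > 0`, bandwidth
`B > 0` and SNR constants `c_n > 0`, let `T_min = max_n (T_n^comp + d_n·ln 2/(B·c_n))`
and for `T > T_min` let `γ_n(T) > 0` solve `f_{c_n}(γ) = d_n·ln 2/(B(T − T_n^comp))`.
Then the total demanded bandwidth `S(T) = Σ_n γ_n(T)` is continuous and strictly
decreasing on `(T_min, ∞)`, `S(T) → ∞` as `T → T_min⁺`, `S(T) → 0` as `T → ∞`; hence
there is a unique `T* ∈ (T_min, ∞)` with `S(T*) = 1`. -/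
theorem total_bandwidth_demand (N : ℕ) (hN : 0 < N)
    (Tcomp d c : Fin N → ℝ) (B : ℝ)
    (hTcomp : ∀ n, 0 ≤ Tcomp n) (hd : ∀ n, 0 < d n) (hc : ∀ n, 0 < c n) (hB : 0 < B)
    (Tmin : ℝ) (hTmin : Tmin = ⨆ n, (Tcomp n + d n * Real.log 2 / (B * c n)))
    (γfun : Fin N → ℝ → ℝ)
    (hγfun : ∀ n, ∀ T : ℝ, Tmin < T →
      0 < γfun n T ∧
        γfun n T * Real.log (1 + c n / γfun n T) =
          d n * Real.log 2 / (B * (T - Tcomp n))) :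
    ContinuousOn (fun T => ∑ n, γfun n T) (Set.Ioi Tmin) ∧
    StrictAntiOn (fun T => ∑ n, γfun n T) (Set.Ioi Tmin) ∧
    Filter.Tendsto (fun T => ∑ n, γfun n T)
      (nhdsWithin Tmin (Set.Ioi Tmin)) Filter.atTop ∧
    Filter.Tendsto (fun T => ∑ n, γfun n T) Filter.atTop (nhds 0) ∧
    (∃! Tstar : ℝ, Tstar ∈ Set.Ioi Tmin ∧ ∑ n, γfun n Tstar = 1) :=
  total_bandwidth_demand_general N hN Tcomp d c B hd hc hB Tmin hTmin γfun hγfun
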